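/- For all n ≥ 19 (indeed for all n ≥ 6 once base cases are verified), the 1×n misère Domineering strip D_n equals D_{n−6} + (−1,0)# in the dead-end order, where (−1,0)# = {·|{·|−1,0}} with −1 = {·|0}; consequently the values of D_n are eventually periodic with period 6, given explicitly by: D_{6k} = D_{6k+1} = k·(−1,0)#, D_{6k+2} = D_{6k+3} = k·(−1,0)# + (−1), D_{6k+4} = k·(−1,0)# + (−1,0), D_{6k+5} = k·(−1,0)# + (−2), where (−1,0) = {·|−1,0} and −2 = {·|−1}. -/

import Mathlib

/-- A Left dead-end: a partizan game in which no subposition has a Left option,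
modeled as a finitely-branching rooted tree of Right options. -/
inductive LDE : Type where
  | node : List LDE → LDE

/-- The (Right) options of a Left dead-end. -/
def LDE.opts : LDE → List LDE
  | .node l => l

/-- The dead-end order: `G ≥ H` iff every Right option of `G` is `≥` some Right
option of `H`, and if `G` has no Right options then neither does `H`. -/
def LDE.Ge : LDE → LDE → Prop
  | .node gs, .node hs =>
      (∀ g ∈ gs, ∃ h ∈ hs, LDE.Ge g h) ∧ (gs = [] → hs = [])
termination_by G _ => sizeOf G
decreasing_by
  have := List.sizeOf_lt_of_mem ‹g ∈ gs›; simp; omega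

/-- Equality (equivalence) in the dead-end order. -/
def LDE.Eqv (G H : LDE) : Prop := LDE.Ge G H ∧ LDE.Ge H G

/-- Disjunctive sum of Left dead-ends: the Right options of `G + H` are
`G^R + H` and `G + H^R`. -/
def LDE.add : LDE → LDE → LDE
  | .node gs, .node hs =>
      .node (gs.attach.map (fun g => LDE.add g.1 (.node hs)) ++
             hs.attach.map (fun h => LDE.add (.node gs) h.1))
termination_by g h => sizeOf g + sizeOf h
decreasing_by
  · have := List.sizeOf_lt_of_mem g.2; simp; omega
  · have := List.sizeOf_lt_of_mem h.2; simp; omega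

/-- `k` copies of `x`, added together. -/
def LDE.ksum : ℕ → LDE → LDE
  | 0, _ => LDE.node []
  | n+1, x => (LDE.ksum n x).add x

/-- The `1 × n` misère Domineering strip: a Left dead-end whose Right options
(Right places a horizontal domino) are `D_a + D_b` for `a + b = n - 2`. -/
def domStrip : ℕ → LDE
  | 0 => LDE.node []
  | 1 => LDE.node []
  | (n+2) => LDE.node ((List.range (n+1)).attach.map
      (fun a => (domStrip a.1).add (domStrip (n - a.1))))
termination_by n => n
decreasing_by
  · have := List.mem_range.mp a.2; omega
  · have := List.mem_range.mp a.2; omega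

/-- `−1 = {·|0}`. -/
def negOne : LDE := LDE.node [LDE.node []]

/-- `−2 = {·|−1}`. -/
def negTwo : LDE := LDE.node [negOne]

/-- `(−1,0) = {·|−1,0}`. -/
def mOneZero : LDE := LDE.node [negOne, LDE.node []]

/-- `(−1,0)# = {·|(−1,0)}`. -/
def mOneZeroSharp : LDE := LDE.node [mOneZero]

/-!
The dead-end order is a preorder for which disjunctive sum is monotone, commutative and
associative up to equivalence, with `0` neutral. So `D_n ≈ V n` for any sequence `V` with
`V 0 ≈ V 1 ≈ 0` that satisfies the strip recursion `V (n + 2) ≈ {· | V a + V (n - a)}`, by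
strong induction. We take `V (6k + t) = k·(−1,0)# + b t` with `b = 0, 0, −1, −1, (−1,0), −2`.
Since `V a + V b ≈ (i + j)·(−1,0)# + (V r + V s)` for `a = 6i + r`, `b = 6j + s`, and the Right
options of `k·(−1,0)#` are `(k − 1)·(−1,0)# + (−1,0)`, i.e. `V (6k − 2)`, both halves of the
recursion reduce to a finite comparison of games built from residues, checked by unfolding.
-/

namespace LDE

theorem opts_node (l : List LDE) : (node l).opts = l := rfl

theorem ge_iff (G H : LDE) :
    Ge G H ↔ (∀ g ∈ G.opts, ∃ h ∈ H.opts, Ge g h) ∧ (G.opts = [] → H.opts = []) := by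
  cases G; cases H; rw [Ge]; rfl

theorem sizeOf_lt_of_mem_opts {g G : LDE} (h : g ∈ G.opts) : sizeOf g < sizeOf G := by
  cases G with
  | node l =>
    rw [opts_node] at h
    have := List.sizeOf_lt_of_mem h
    simp; omega

theorem add_opts (G H : LDE) :
    (G.add H).opts = G.opts.map (·.add H) ++ H.opts.map (G.add ·) := by
  cases G; cases H; rw [LDE.add]; simp [opts]

theorem mem_add_opts {x G H : LDE} :
    x ∈ (G.add H).opts ↔ (∃ g ∈ G.opts, x = g.add H) ∨ ∃ h ∈ H.opts, x = G.add h := by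
  simp [add_opts, eq_comm]

theorem add_opts_eq_nil {G H : LDE} : (G.add H).opts = [] ↔ G.opts = [] ∧ H.opts = [] := by
  simp [add_opts]

theorem ge_refl (G : LDE) : Ge G G := by
  rw [ge_iff]
  exact ⟨fun g hg => ⟨g, hg, ge_refl g⟩, id⟩
termination_by sizeOf G
decreasing_by exact sizeOf_lt_of_mem_opts hg

theorem ge_trans {G H K : LDE} (h₁ : Ge G H) (h₂ : Ge H K) : Ge G K := by
  rw [ge_iff] at *
  refine ⟨fun g hg => ?_, h₂.2 ∘ h₁.2⟩
  obtain ⟨h, hh, hgh⟩ := h₁.1 g hg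
  obtain ⟨k, hk, hhk⟩ := h₂.1 h hh
  exact ⟨k, hk, ge_trans hgh hhk⟩
termination_by sizeOf G + sizeOf H + sizeOf K
decreasing_by
  have := sizeOf_lt_of_mem_opts hg
  have := sizeOf_lt_of_mem_opts hh
  have := sizeOf_lt_of_mem_opts hk
  omega

instance : @Trans LDE LDE LDE Ge Ge Ge := ⟨ge_trans⟩

theorem Eqv.refl (G : LDE) : Eqv G G := ⟨ge_refl G, ge_refl G⟩

theorem Eqv.symm {G H : LDE} (h : Eqv G H) : Eqv H G := ⟨h.2, h.1⟩

theorem Eqv.trans {G H K : LDE} (h₁ : Eqv G H) (h₂ : Eqv H K) : Eqv G K :=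
  ⟨ge_trans h₁.1 h₂.1, ge_trans h₂.2 h₁.2⟩

instance : @Trans LDE LDE LDE Eqv Eqv Eqv := ⟨Eqv.trans⟩

theorem exists_opt_ge_of_ge {G H g : LDE} (h : Ge G H) (hg : g ∈ G.opts) :
    ∃ h ∈ H.opts, Ge g h :=
  ((ge_iff G H).1 h).1 g hg

theorem add_ge_add_right {G G' : LDE} (h : Ge G G') (H : LDE) :
    Ge (G.add H) (G'.add H) := by
  rw [ge_iff, add_opts_eq_nil, add_opts_eq_nil]
  refine ⟨fun x hx => ?_, fun he => ⟨((ge_iff G G').1 h).2 he.1, he.2⟩⟩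
  rcases mem_add_opts.1 hx with ⟨g, hg, rfl⟩ | ⟨k, hk, rfl⟩
  · obtain ⟨g', hg', hgg'⟩ := exists_opt_ge_of_ge h hg
    exact ⟨g'.add H, mem_add_opts.2 (.inl ⟨g', hg', rfl⟩), add_ge_add_right hgg' H⟩
  · exact ⟨G'.add k, mem_add_opts.2 (.inr ⟨k, hk, rfl⟩), add_ge_add_right h k⟩
termination_by sizeOf G + sizeOf H
decreasing_by
  · have := sizeOf_lt_of_mem_opts hg; omega
  · have := sizeOf_lt_of_mem_opts hk; omega

theorem ge_add_comm (G H : LDE) : Ge (G.add H) (H.add G) := by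
  rw [ge_iff, add_opts_eq_nil, add_opts_eq_nil]
  refine ⟨fun x hx => ?_, And.symm⟩
  rcases mem_add_opts.1 hx with ⟨g, hg, rfl⟩ | ⟨k, hk, rfl⟩
  · exact ⟨H.add g, mem_add_opts.2 (.inr ⟨g, hg, rfl⟩), ge_add_comm g H⟩
  · exact ⟨k.add G, mem_add_opts.2 (.inl ⟨k, hk, rfl⟩), ge_add_comm G k⟩
termination_by sizeOf G + sizeOf H
decreasing_by
  · have := sizeOf_lt_of_mem_opts hg; omega
  · have := sizeOf_lt_of_mem_opts hk; omega

theorem add_ge_add_left (G : LDE) {H H' : LDE} (h : Ge H H') : Ge (G.add H) (G.add H') :=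
  calc Ge (G.add H) (H.add G) := ge_add_comm G H
    Ge _ (H'.add G) := add_ge_add_right h G
    Ge _ (G.add H') := ge_add_comm H' G

theorem Eqv.add {G G' H H' : LDE} (hG : Eqv G G') (hH : Eqv H H') :
    Eqv (G.add H) (G'.add H') :=
  ⟨ge_trans (add_ge_add_right hG.1 H) (add_ge_add_left G' hH.1),
   ge_trans (add_ge_add_right hG.2 H') (add_ge_add_left G hH.2)⟩

theorem eqv_add_comm (G H : LDE) : Eqv (G.add H) (H.add G) :=
  ⟨ge_add_comm G H, ge_add_comm H G⟩

theorem ge_add_assoc (A B C : LDE) : Ge ((A.add B).add C) (A.add (B.add C)) := by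
  rw [ge_iff]
  refine ⟨fun x hx => ?_, fun he => ?_⟩
  · rcases mem_add_opts.1 hx with ⟨g, hg, rfl⟩ | ⟨c, hc, rfl⟩
    · rcases mem_add_opts.1 hg with ⟨a, ha, rfl⟩ | ⟨b, hb, rfl⟩
      · exact ⟨a.add (B.add C), mem_add_opts.2 (.inl ⟨a, ha, rfl⟩), ge_add_assoc a B C⟩
      · exact ⟨A.add (b.add C),
          mem_add_opts.2 (.inr ⟨_, mem_add_opts.2 (.inl ⟨b, hb, rfl⟩), rfl⟩), ge_add_assoc A b C⟩
    · exact ⟨A.add (B.add c),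
        mem_add_opts.2 (.inr ⟨_, mem_add_opts.2 (.inr ⟨c, hc, rfl⟩), rfl⟩), ge_add_assoc A B c⟩
  · simp only [add_opts_eq_nil] at he ⊢
    exact ⟨he.1.1, he.1.2, he.2⟩
termination_by sizeOf A + sizeOf B + sizeOf C
decreasing_by
  · have := sizeOf_lt_of_mem_opts ha; omega
  · have := sizeOf_lt_of_mem_opts hb; omega
  · have := sizeOf_lt_of_mem_opts hc; omega

theorem eqv_add_assoc (A B C : LDE) : Eqv ((A.add B).add C) (A.add (B.add C)) := by
  refine ⟨ge_add_assoc A B C, ?_⟩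
  calc Ge (A.add (B.add C)) ((C.add B).add A) :=
        ge_trans (ge_add_comm _ _) (add_ge_add_right (ge_add_comm B C) A)
    Ge _ (C.add (B.add A)) := ge_add_assoc C B A
    Ge _ ((A.add B).add C) := ge_trans (ge_add_comm _ _) (add_ge_add_right (ge_add_comm B A) C)

theorem eqv_add_right_comm (A B C : LDE) : Eqv ((A.add B).add C) ((A.add C).add B) :=
  calc Eqv ((A.add B).add C) (A.add (B.add C)) := eqv_add_assoc A B C
    Eqv _ (A.add (C.add B)) := (Eqv.refl A).add (eqv_add_comm B C)
    Eqv _ ((A.add C).add B) := (eqv_add_assoc A C B).symm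

theorem eqv_add_add_add_comm (A B C D : LDE) :
    Eqv ((A.add B).add (C.add D)) ((A.add C).add (B.add D)) :=
  calc Eqv ((A.add B).add (C.add D)) (((A.add B).add C).add D) := (eqv_add_assoc _ C D).symm
    Eqv _ (((A.add C).add B).add D) := (eqv_add_right_comm A B C).add (Eqv.refl D)
    Eqv _ ((A.add C).add (B.add D)) := eqv_add_assoc _ B D

theorem eqv_add_zero (A : LDE) : Eqv (A.add (node [])) A := by
  have hopts : (A.add (node [])).opts = A.opts.map (·.add (node [])) := by
    simp [add_opts, opts_node]
  constructor <;> rw [ge_iff, hopts]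
  · refine ⟨fun x hx => ?_, by simp⟩
    obtain ⟨a, ha, rfl⟩ := List.mem_map.1 hx
    exact ⟨a, ha, (eqv_add_zero a).1⟩
  · refine ⟨fun a ha => ⟨a.add (node []), List.mem_map_of_mem ha, (eqv_add_zero a).2⟩, by simp⟩
termination_by sizeOf A
decreasing_by all_goals exact sizeOf_lt_of_mem_opts ha

theorem eqv_zero_add (A : LDE) : Eqv ((node []).add A) A :=
  (eqv_add_comm _ _).trans (eqv_add_zero A)

theorem eqv_ksum_add (X : LDE) (i : ℕ) : ∀ j, Eqv (ksum (i + j) X) ((ksum i X).add (ksum j X))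
  | 0 => (eqv_add_zero _).symm
  | j + 1 => ((eqv_ksum_add X i j).add (Eqv.refl X)).trans (eqv_add_assoc _ _ _)

theorem exists_eqv_of_mem_ksum_opts {X g : LDE} :
    ∀ {k : ℕ}, g ∈ (ksum k X).opts → ∃ m, k = m + 1 ∧ ∃ x ∈ X.opts, Eqv g ((ksum m X).add x)
  | 0, hg => by simp [ksum, opts_node] at hg
  | k + 1, hg => by
    rw [ksum] at hg
    rcases mem_add_opts.1 hg with ⟨g', hg', rfl⟩ | ⟨x, hx, rfl⟩
    · obtain ⟨m, rfl, x, hx, he⟩ := exists_eqv_of_mem_ksum_opts hg'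
      exact ⟨m + 1, rfl, x, hx, (he.add (Eqv.refl X)).trans (eqv_add_right_comm _ _ _)⟩
    · exact ⟨k, rfl, x, hx, Eqv.refl _⟩

theorem exists_opt_of_add_ge {A B G X b : LDE} (hb : b ∈ B.opts) (hX : Ge X b)
    (hG : Ge (A.add B) G) : ∃ g ∈ G.opts, Ge (A.add X) g := by
  obtain ⟨g, hg, hbg⟩ := exists_opt_ge_of_ge hG (mem_add_opts.2 (.inr ⟨b, hb, rfl⟩))
  exact ⟨g, hg, ge_trans (add_ge_add_left A hX) hbg⟩

theorem eqv_node_of_forall_exists {G : LDE} {l : List LDE} (hl : l ≠ [])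
    (hG : ∀ g ∈ G.opts, ∃ x ∈ l, Ge g x) (hl' : ∀ x ∈ l, ∃ g ∈ G.opts, Ge x g) :
    Eqv G (node l) := by
  refine ⟨(ge_iff _ _).2 ⟨hG, fun hnil => ?_⟩, (ge_iff _ _).2 ⟨hl', fun h => absurd h hl⟩⟩
  obtain ⟨x, hx⟩ := List.exists_mem_of_ne_nil l hl
  obtain ⟨g, hg, -⟩ := hl' x hx
  simp [hnil] at hg

theorem eqv_node_map {α : Type*} (l : List α) {f f' : α → LDE}
    (h : ∀ a ∈ l, Eqv (f a) (f' a)) :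
    Eqv (node (l.map f)) (node (l.map f')) := by
  constructor <;> rw [ge_iff] <;> simp only [opts_node, List.mem_map, List.map_eq_nil_iff] <;>
    refine ⟨?_, id⟩ <;> rintro _ ⟨a, ha, rfl⟩
  · exact ⟨f' a, ⟨a, ha, rfl⟩, (h a ha).1⟩
  · exact ⟨f a, ⟨a, ha, rfl⟩, (h a ha).2⟩

end LDE

def stripOptions (V : ℕ → LDE) (n : ℕ) : List LDE :=
  (List.range (n + 1)).map fun a => (V a).add (V (n - a))

theorem mem_stripOptions {V : ℕ → LDE} {n : ℕ} {x : LDE} :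
    x ∈ stripOptions V n ↔ ∃ a ≤ n, (V a).add (V (n - a)) = x := by
  simp [stripOptions]

theorem add_mem_stripOptions (V : ℕ → LDE) (a b : ℕ) :
    (V a).add (V b) ∈ stripOptions V (a + b) :=
  mem_stripOptions.2 ⟨a, by omega, by rw [Nat.add_sub_cancel_left]⟩

theorem stripOptions_ne_nil (V : ℕ → LDE) (n : ℕ) : stripOptions V n ≠ [] := by
  simp [stripOptions]

theorem domStrip_add_two (n : ℕ) :
    domStrip (n + 2) = .node (stripOptions domStrip n) := by
  rw [domStrip]; simp [stripOptions]

theorem domStrip_eqv_of_recursion (V : ℕ → LDE) (h₀ : LDE.Eqv (V 0) (.node []))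
    (h₁ : LDE.Eqv (V 1) (.node [])) (hV : ∀ n, LDE.Eqv (V (n + 2)) (.node (stripOptions V n))) :
    ∀ n, LDE.Eqv (domStrip n) (V n)
  | 0 => by rw [domStrip]; exact h₀.symm
  | 1 => by rw [domStrip]; exact h₁.symm
  | n + 2 => by
    rw [domStrip_add_two]
    refine .trans (LDE.eqv_node_map _ fun a ha => ?_) (hV n).symm
    have := List.mem_range.1 ha
    exact (domStrip_eqv_of_recursion V h₀ h₁ hV a).add
      (domStrip_eqv_of_recursion V h₀ h₁ hV (n - a))

namespace LDE

def baseValue : ℕ → LDE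
  | 0 | 1 => node []
  | 2 | 3 => negOne
  | 4 => mOneZero
  | _ => negTwo

def stripValue (n : ℕ) : LDE := (ksum (n / 6) mOneZeroSharp).add (baseValue (n % 6))

theorem stripValue_six_mul_add_of_lt (k : ℕ) {t : ℕ} (ht : t < 6) :
    stripValue (6 * k + t) = (ksum k mOneZeroSharp).add (baseValue t) := by
  rw [stripValue, Nat.mul_add_div (by norm_num), Nat.mul_add_mod, Nat.div_eq_of_lt ht,
    Nat.mod_eq_of_lt ht, Nat.add_zero]

theorem stripValue_of_lt {t : ℕ} (ht : t < 6) : stripValue t = (node []).add (baseValue t) := by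
  simpa [ksum] using stripValue_six_mul_add_of_lt 0 ht

theorem stripValue_six_mul_add (k m : ℕ) :
    Eqv (stripValue (6 * k + m)) ((ksum k mOneZeroSharp).add (stripValue m)) := by
  rw [stripValue, stripValue, Nat.mul_add_div (by norm_num), Nat.mul_add_mod]
  exact ((eqv_ksum_add _ k (m / 6)).add (Eqv.refl _)).trans (eqv_add_assoc _ _ _)

theorem node_add_node (gs hs : List LDE) : (node gs).add (node hs) =
    node (gs.map (·.add (node hs)) ++ hs.map ((node gs).add ·)) := by
  rw [LDE.add]; simp

theorem exists_stripValue_opt_le_of_lt {r s : ℕ} (hr : r < 6) (hs : s < 6) :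
    ∃ g ∈ (stripValue (r + s + 2)).opts, Ge ((stripValue r).add (stripValue s)) g := by
  interval_cases r <;> interval_cases s <;>
    simp [stripValue, baseValue, ksum, negOne, negTwo, mOneZero, mOneZeroSharp, node_add_node,
      Ge, opts_node]

/-- `u < t - 1` forces `2 ≤ t`, so the truncated subtractions are exact. -/
theorem exists_ge_add_of_mem_baseValue_opts {t : ℕ} (ht : t < 6) :
    ∀ p ∈ (baseValue t).opts,
      ∃ u ∈ List.range (t - 1), Ge p ((stripValue u).add (stripValue (t - 2 - u))) := by
  interval_cases t <;>
    simp [stripValue, baseValue, ksum, negOne, negTwo, mOneZero, mOneZeroSharp, node_add_node,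
      Ge, opts_node, List.range_succ]

theorem exists_stripValue_opt_le (a b : ℕ) :
    ∃ g ∈ (stripValue (a + b + 2)).opts, Ge ((stripValue a).add (stripValue b)) g := by
  obtain ⟨i, r, hr, rfl⟩ : ∃ i r, r < 6 ∧ a = 6 * i + r :=
    ⟨a / 6, a % 6, Nat.mod_lt _ (by norm_num), (Nat.div_add_mod a 6).symm⟩
  obtain ⟨j, s, hs, rfl⟩ : ∃ j s, s < 6 ∧ b = 6 * j + s :=
    ⟨b / 6, b % 6, Nat.mod_lt _ (by norm_num), (Nat.div_add_mod b 6).symm⟩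
  set K := ksum (i + j) mOneZeroSharp
  have hsum : Eqv ((stripValue (6 * i + r)).add (stripValue (6 * j + s)))
      (K.add ((stripValue r).add (stripValue s))) :=
    calc Eqv _ (((ksum i mOneZeroSharp).add (stripValue r)).add
          ((ksum j mOneZeroSharp).add (stripValue s))) :=
          (stripValue_six_mul_add i r).add (stripValue_six_mul_add j s)
      Eqv _ (((ksum i mOneZeroSharp).add (ksum j mOneZeroSharp)).add
          ((stripValue r).add (stripValue s))) := eqv_add_add_add_comm _ _ _ _
      Eqv _ (K.add ((stripValue r).add (stripValue s))) :=
          (eqv_ksum_add _ i j).symm.add (Eqv.refl _)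
  have htarget :
      Ge (K.add (stripValue (r + s + 2))) (stripValue (6 * i + r + (6 * j + s) + 2)) := by
    rw [show 6 * i + r + (6 * j + s) + 2 = 6 * (i + j) + (r + s + 2) by ring]
    exact (stripValue_six_mul_add _ _).2
  obtain ⟨x, hx, hrs⟩ := exists_stripValue_opt_le_of_lt hr hs
  obtain ⟨g, hg, hgx⟩ := exists_opt_of_add_ge hx hrs htarget
  exact ⟨g, hg, ge_trans hsum.1 hgx⟩

theorem exists_stripOptions_le_of_mem_stripValue_opts (n : ℕ) :
    ∀ g ∈ (stripValue (n + 2)).opts, ∃ x ∈ stripOptions stripValue n, Ge g x := by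
  obtain ⟨k, t, ht, hkt⟩ : ∃ k t, t < 6 ∧ n + 2 = 6 * k + t :=
    ⟨(n + 2) / 6, (n + 2) % 6, Nat.mod_lt _ (by norm_num), (Nat.div_add_mod _ 6).symm⟩
  intro g hg
  rw [hkt, stripValue_six_mul_add_of_lt k ht] at hg
  rcases mem_add_opts.1 hg with ⟨g', hg', rfl⟩ | ⟨p, hp, rfl⟩
  · obtain ⟨m, rfl, x, hx, hg'⟩ := exists_eqv_of_mem_ksum_opts hg'
    obtain rfl : x = mOneZero := by simpa [mOneZeroSharp, opts_node] using hx
    rw [show n = 6 * m + 4 + t by omega]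
    refine ⟨_, add_mem_stripOptions _ _ _, ?_⟩
    rw [stripValue_six_mul_add_of_lt m (by norm_num), stripValue_of_lt ht]
    exact ge_trans (add_ge_add_right hg'.1 _) (add_ge_add_left _ (eqv_zero_add _).2)
  · obtain ⟨u, hu, hpu⟩ := exists_ge_add_of_mem_baseValue_opts ht p hp
    have := List.mem_range.1 hu
    rw [show n = 6 * k + u + (t - 2 - u) by omega]
    refine ⟨_, add_mem_stripOptions _ _ _, ?_⟩
    calc Ge _ ((ksum k mOneZeroSharp).add ((stripValue u).add (stripValue (t - 2 - u)))) :=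
          add_ge_add_left _ hpu
      Ge _ (((ksum k mOneZeroSharp).add (stripValue u)).add (stripValue (t - 2 - u))) :=
          (eqv_add_assoc _ _ _).2
      Ge _ ((stripValue (6 * k + u)).add (stripValue (t - 2 - u))) :=
          add_ge_add_right (stripValue_six_mul_add k u).2 _

theorem stripValue_add_two_eqv (n : ℕ) :
    Eqv (stripValue (n + 2)) (node (stripOptions stripValue n)) := by
  refine eqv_node_of_forall_exists (stripOptions_ne_nil _ n)
    (exists_stripOptions_le_of_mem_stripValue_opts n) fun x hx => ?_
  obtain ⟨a, ha, rfl⟩ := mem_stripOptions.1 hx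
  simpa [Nat.add_sub_cancel' ha] using exists_stripValue_opt_le a (n - a)

theorem stripValue_add_six (m : ℕ) :
    Eqv (stripValue (m + 6)) ((stripValue m).add mOneZeroSharp) := by
  rw [add_comm, ← mul_one 6]
  exact (stripValue_six_mul_add 1 m).trans
    ((eqv_add_comm _ _).trans ((Eqv.refl _).add (eqv_zero_add _)))

end LDE

theorem domStrip_eqv_stripValue : ∀ n, LDE.Eqv (domStrip n) (LDE.stripValue n) :=
  domStrip_eqv_of_recursion _ (LDE.eqv_zero_add _) (LDE.eqv_zero_add _)
    LDE.stripValue_add_two_eqv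

theorem domStrip_add_six_eqv (m : ℕ) :
    LDE.Eqv (domStrip (m + 6)) ((domStrip m).add mOneZeroSharp) :=
  (domStrip_eqv_stripValue _).trans
    ((LDE.stripValue_add_six m).trans ((domStrip_eqv_stripValue m).symm.add (.refl _)))

theorem domStrip_six_mul_add_eqv (k : ℕ) {t : ℕ} (ht : t < 6) :
    LDE.Eqv (domStrip (6 * k + t)) ((LDE.ksum k mOneZeroSharp).add (LDE.baseValue t)) :=
  LDE.stripValue_six_mul_add_of_lt k ht ▸ domStrip_eqv_stripValue _

/-- for all `n ≥ 19`, `D_n = D_{n−6} + (−1,0)#` in the dead-end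
order; consequently the values are periodic: `D_{6k} = D_{6k+1} = k·(−1,0)#`,
`D_{6k+2} = D_{6k+3} = k·(−1,0)# + (−1)`, `D_{6k+4} = k·(−1,0)# + (−1,0)`,
`D_{6k+5} = k·(−1,0)# + (−2)`. -/
theorem stmt18 :
    (∀ n : ℕ, 19 ≤ n →
      LDE.Eqv (domStrip n) ((domStrip (n - 6)).add mOneZeroSharp)) ∧
    (∀ k : ℕ,
      LDE.Eqv (domStrip (6*k)) (LDE.ksum k mOneZeroSharp) ∧
      LDE.Eqv (domStrip (6*k+1)) (LDE.ksum k mOneZeroSharp) ∧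
      LDE.Eqv (domStrip (6*k+2)) ((LDE.ksum k mOneZeroSharp).add negOne) ∧
      LDE.Eqv (domStrip (6*k+3)) ((LDE.ksum k mOneZeroSharp).add negOne) ∧
      LDE.Eqv (domStrip (6*k+4)) ((LDE.ksum k mOneZeroSharp).add mOneZero) ∧
      LDE.Eqv (domStrip (6*k+5)) ((LDE.ksum k mOneZeroSharp).add negTwo)) := by
  refine ⟨fun n hn => ?_, fun k => ?_⟩
  · obtain ⟨m, rfl⟩ : ∃ m, n = m + 6 := ⟨n - 6, by omega⟩
    rw [Nat.add_sub_cancel]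
    exact domStrip_add_six_eqv m
  · exact ⟨(domStrip_six_mul_add_eqv k (t := 0) (by norm_num)).trans (LDE.eqv_add_zero _),
      (domStrip_six_mul_add_eqv k (t := 1) (by norm_num)).trans (LDE.eqv_add_zero _),
      domStrip_six_mul_add_eqv k (by norm_num), domStrip_six_mul_add_eqv k (by norm_num),
      domStrip_six_mul_add_eqv k (by norm_num), domStrip_six_mul_add_eqv k (by norm_num)⟩
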